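/- arXiv:2605.22475 — 3 statements merged into one kernel-verified Lean document; each statement's English description precedes it below -/
import Mathlib

section
/- Let V be a complex Banach space, Δ : V → V a continuous ℂ-linear map, s₀ ∈ ℂ, r > 0, and N ≥ 1 an integer. Let (aₙ)_{n ≥ −N} be vectors in V such that the Laurent series E(s) = Σ_{n ≥ −N} aₙ (s − s₀)ⁿ converges in V for all s with 0 < |s − s₀| < r, and let λ be a ℂ-valued function analytic on the disc |s − s₀| < r. If Δ(E(s)) = λ(s) • E(s) for all s with 0 < |s − s₀| < r, then the leading Laurent coefficient satisfies the genuine eigenvalue equation: Δ(a₋ₙ) = λ(s₀) • a₋ₙ for n = N, i.e., Δ(a_{−N}) = λ(s₀) • a_{−N}. -/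
/-!
Multiplying the Laurent series by `(s - s₀) ^ N` turns it into a power series that converges on
the punctured disc, hence is continuous at `s₀` with value `a (-N)`. Letting `s → s₀` in
`Δ ((s - s₀) ^ N • E s) = λ(s) • ((s - s₀) ^ N • E s)` gives the eigenvalue equation for
`a (-N)`, by continuity of `Δ` and of `λ`.
-/

open Filter Topology

section LaurentSeries

variable {𝕜 V : Type*} [NontriviallyNormedField 𝕜] [NormedAddCommGroup V] [NormedSpace 𝕜 V]

theorem hasSum_pow_smul_of_hasSum_zpow_smul {a : ℤ → V} {N : ℕ}
    (ha : ∀ n : ℤ, n < -(N : ℤ) → a n = 0) {z : 𝕜} (hz : z ≠ 0) {e : V}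
    (he : HasSum (fun n : ℤ => z ^ n • a n) e) :
    HasSum (fun m : ℕ => z ^ m • a (m - N)) (z ^ N • e) := by
  have hshift : HasSum (fun n : ℤ => z ^ (n + N) • a n) (z ^ N • e) := by
    refine (he.const_smul (z ^ N)).congr_fun fun n => ?_
    rw [zpow_add₀ hz, zpow_natCast, smul_smul, mul_comm]
  have hinj : Function.Injective (fun m : ℕ => (m : ℤ) - N) := fun m₁ m₂ h => by simpa using h
  refine ((hinj.hasSum_iff fun n hn => ?_).mpr hshift).congr_fun fun m => ?_
  · have hlt : n < -(N : ℤ) := by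
      by_contra! hge
      exact hn ⟨(n + N).toNat, by simp; omega⟩
    simp [ha n hlt]
  · simp

variable [CompleteSpace V]

theorem tendsto_tsum_pow_smul_nhds_zero {b : ℕ → V} {ρ : 𝕜}
    (hb : Summable fun m => ρ ^ m • b m) (hρ : ρ ≠ 0) :
    Tendsto (fun z : 𝕜 => ∑' m, z ^ m • b m) (𝓝 0) (𝓝 (b 0)) := by
  let p : FormalMultilinearSeries 𝕜 𝕜 V :=
    fun m => ContinuousMultilinearMap.mkPiRing 𝕜 (Fin m) (b m)
  have hsum : p.sum = fun z => ∑' m, z ^ m • b m := by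
    funext z
    simp [p, FormalMultilinearSeries.sum]
  have hradius : (‖ρ‖₊ : ENNReal) ≤ p.radius := by
    refine p.le_radius_of_tendsto (l := 0) ?_
    simpa [p, norm_smul, mul_comm] using hb.tendsto_atTop_zero.norm
  have hcont : ContinuousAt p.sum 0 :=
    (p.hasFPowerSeriesOnBall (lt_of_lt_of_le (by simpa using hρ) hradius)).analyticAt.continuousAt
  rw [hsum] at hcont
  convert hcont.tendsto
  rw [tsum_eq_single 0 fun m hm => by simp [zero_pow hm], pow_zero, one_smul]

theorem tendsto_pow_smul_of_hasSum_laurent {a : ℤ → V} {N : ℕ}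
    (ha : ∀ n : ℤ, n < -(N : ℤ) → a n = 0) {E : 𝕜 → V} {s₀ : 𝕜} {r : ℝ} (hr : 0 < r)
    (hE : ∀ s : 𝕜, s ≠ s₀ → ‖s - s₀‖ < r → HasSum (fun n : ℤ => (s - s₀) ^ n • a n) (E s)) :
    Tendsto (fun s => (s - s₀) ^ N • E s) (𝓝[≠] s₀) (𝓝 (a (-(N : ℤ)))) := by
  have hshift (s : 𝕜) (hs : s ≠ s₀) (hsr : ‖s - s₀‖ < r) :=
    hasSum_pow_smul_of_hasSum_zpow_smul ha (sub_ne_zero.mpr hs) (hE s hs hsr)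
  obtain ⟨ρ, hρ, hρr⟩ := NormedField.exists_norm_lt 𝕜 hr
  have hsummable := (hshift (s₀ + ρ) (by simpa using norm_pos_iff.mp hρ) (by simpa)).summable
  simp only [add_sub_cancel_left] at hsummable
  have hseries : Tendsto (fun s => ∑' m : ℕ, (s - s₀) ^ m • a (m - N)) (𝓝 s₀)
      (𝓝 (a (-(N : ℤ)))) := by
    have h := (tendsto_tsum_pow_smul_nhds_zero hsummable (norm_pos_iff.mp hρ)).comp
      ((continuous_sub_right s₀).tendsto' s₀ 0 (sub_self s₀))
    simpa [Function.comp_def] using h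
  refine (hseries.mono_left nhdsWithin_le_nhds).congr' ?_
  filter_upwards [self_mem_nhdsWithin, nhdsWithin_le_nhds (Metric.ball_mem_nhds s₀ hr)]
    with s hs hsr
  exact (hshift s hs (by simpa [dist_eq_norm] using hsr)).tsum_eq

end LaurentSeries

theorem ContinuousLinearMap.apply_eq_smul_of_tendsto {𝕜 V α : Type*} [Semiring 𝕜]
    [TopologicalSpace 𝕜] [TopologicalSpace V] [AddCommMonoid V] [Module 𝕜 V] [ContinuousSMul 𝕜 V]
    [T2Space V] {l : Filter α} [l.NeBot] (Δ : V →L[𝕜] V) {F : α → V} {lam : α → 𝕜} {v : V}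
    {μ : 𝕜} (hF : Tendsto F l (𝓝 v)) (hlam : Tendsto lam l (𝓝 μ))
    (heq : ∀ᶠ x in l, Δ (F x) = lam x • F x) : Δ v = μ • v :=
  tendsto_nhds_unique (((Δ.continuous.tendsto v).comp hF).congr' heq) (hlam.smul hF)

theorem leading_laurent_coefficient_is_eigenvector_general
    {V : Type*} [NormedAddCommGroup V] [NormedSpace ℂ V] [CompleteSpace V]
    (Δ : V →L[ℂ] V) (s₀ : ℂ) (r : ℝ) (hr : 0 < r) (N : ℕ)
    (a : ℤ → V) (ha : ∀ n : ℤ, n < -(N : ℤ) → a n = 0)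
    (E : ℂ → V) (lam : ℂ → ℂ)
    (hE : ∀ s : ℂ, s ≠ s₀ → ‖s - s₀‖ < r →
      HasSum (fun n : ℤ => (s - s₀) ^ n • a n) (E s))
    (hlam : ∀ s ∈ Metric.ball s₀ r, AnalyticAt ℂ lam s)
    (heq : ∀ s : ℂ, s ≠ s₀ → ‖s - s₀‖ < r → Δ (E s) = lam s • E s) :
    Δ (a (-(N : ℤ))) = lam s₀ • a (-(N : ℤ)) := by
  refine Δ.apply_eq_smul_of_tendsto (tendsto_pow_smul_of_hasSum_laurent ha hr hE)
    ((hlam s₀ (Metric.mem_ball_self hr)).continuousAt.tendsto.mono_left nhdsWithin_le_nhds) ?_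
  filter_upwards [self_mem_nhdsWithin, nhdsWithin_le_nhds (Metric.ball_mem_nhds s₀ hr)]
    with s hs hsr
  rw [map_smul, heq s hs (by simpa [dist_eq_norm] using hsr), smul_comm]

/-- At a pole of order at most `N` of an eigenfunction family `E(s) = Σ_{n ≥ -N} aₙ (s-s₀)ⁿ`,
the leading Laurent coefficient `a_{-N}` satisfies the genuine eigenvalue equation
`Δ(a_{-N}) = λ(s₀) • a_{-N}`. -/
theorem leading_laurent_coefficient_is_eigenvector
    {V : Type*} [NormedAddCommGroup V] [NormedSpace ℂ V] [CompleteSpace V]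
    (Δ : V →L[ℂ] V) (s₀ : ℂ) (r : ℝ) (hr : 0 < r) (N : ℕ) (hN : 1 ≤ N)
    (a : ℤ → V) (ha : ∀ n : ℤ, n < -(N : ℤ) → a n = 0)
    (E : ℂ → V) (lam : ℂ → ℂ)
    (hE : ∀ s : ℂ, s ≠ s₀ → ‖s - s₀‖ < r →
      HasSum (fun n : ℤ => (s - s₀) ^ n • a n) (E s))
    (hlam : ∀ s ∈ Metric.ball s₀ r, AnalyticAt ℂ lam s)
    (heq : ∀ s : ℂ, s ≠ s₀ → ‖s - s₀‖ < r → Δ (E s) = lam s • E s) :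
    Δ (a (-(N : ℤ))) = lam s₀ • a (-(N : ℤ)) :=
  leading_laurent_coefficient_is_eigenvector_general Δ s₀ r hr N a ha E lam hE hlam heq
end

section
/- Let V be a complex Banach space, Δ : V → V a continuous ℂ-linear map, s₀ ∈ ℂ, r > 0, and N ≥ 1 an integer. Let (aₙ)_{n ≥ −N} be vectors in V such that E(s) = Σ_{n ≥ −N} aₙ (s − s₀)ⁿ converges in V for 0 < |s − s₀| < r, let λ be analytic on |s − s₀| < r, and suppose Δ(E(s)) = λ(s) • E(s) for 0 < |s − s₀| < r. Then for every integer n with 1 ≤ n ≤ N, the negative Laurent coefficient a₋ₙ satisfies (Δ − λ(s₀))^{N−n+1}(a₋ₙ) = 0, i.e., applying the map v ↦ Δv − λ(s₀)v exactly (N−n+1) times to a₋ₙ yields zero. -/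
/-!
Put `T = Δ - λ(s₀)` and `μ = dslope λ s₀`, so that the eigen-equation reads
`T E(s) = ((s - s₀) μ(s)) • E(s)`. The function `F(s) = (s - s₀)^N • E(s)` is analytic at `s₀`
with Taylor coefficients `a (m - N)`, and `T^k F(s) = (s - s₀)^k • μ(s)^k • F(s)` vanishes to
order `k` at `s₀`, so the Taylor coefficients `T^k a (m - N)` with `m < k` vanish.
Take `k = N - n + 1` and `m = N - n`.
-/

open Filter Topology

namespace FormalMultilinearSeries

variable (𝕜 : Type*) {E : Type*} [NontriviallyNormedField 𝕜] [NormedAddCommGroup E]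
  [NormedSpace 𝕜 E]

noncomputable def ofCoeff (c : ℕ → E) : FormalMultilinearSeries 𝕜 𝕜 E :=
  fun n => ContinuousMultilinearMap.mkPiRing 𝕜 (Fin n) (c n)

@[simp]
theorem coeff_ofCoeff (c : ℕ → E) (n : ℕ) : (ofCoeff 𝕜 c).coeff n = c n := by
  simp [ofCoeff, coeff]

end FormalMultilinearSeries

open FormalMultilinearSeries

section PowerSeries

variable {𝕜 : Type*} {E : Type*} [NontriviallyNormedField 𝕜] [NormedAddCommGroup E]
  [NormedSpace 𝕜 E] {f g : 𝕜 → E} {z₀ : 𝕜}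

theorem hasFPowerSeriesAt_ofCoeff {c : ℕ → E}
    (h : ∀ᶠ z in 𝓝 z₀, HasSum (fun n => (z - z₀) ^ n • c n) (f z)) :
    HasFPowerSeriesAt f (ofCoeff 𝕜 c) z₀ := by
  rw [hasFPowerSeriesAt_iff, ← map_add_left_nhds_zero z₀, eventually_map] at *
  simpa using h

theorem HasFPowerSeriesAt.coeff_eq_zero_of_eventuallyEq_pow_smul {p : FormalMultilinearSeries 𝕜 𝕜 E}
    {k : ℕ} (hp : HasFPowerSeriesAt f p z₀) (hg : ContinuousAt g z₀)
    (hfg : ∀ᶠ z in 𝓝[≠] z₀, f z = (z - z₀) ^ k • g z) {m : ℕ} (hm : m < k) : p.coeff m = 0 := by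
  induction k generalizing f p m with
  | zero => omega
  | succ k ih =>
    -- `f z₀ = 0`, so the difference quotient `dslope f z₀` is `(z - z₀) ^ k • g z` off `z₀`
    have hf₀ : f z₀ = 0 := by
      have hlim : Tendsto (fun z => (z - z₀) ^ (k + 1) • g z) (𝓝[≠] z₀) (𝓝 0) := by
        have hcont : ContinuousAt (fun z => (z - z₀) ^ (k + 1) • g z) z₀ := by fun_prop
        simpa using hcont.tendsto.mono_left (nhdsWithin_le_nhds (s := {z₀}ᶜ))
      exact tendsto_nhds_unique_of_eventuallyEq
        (hp.continuousAt.tendsto.mono_left nhdsWithin_le_nhds) hlim hfg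
    cases m with
    | zero => rw [coeff, hp.coeff_zero, hf₀]
    | succ m =>
      rw [← coeff_fslope]
      refine ih hp.has_fpower_series_dslope_fslope ?_ (by omega)
      filter_upwards [hfg, self_mem_nhdsWithin] with z hz hzz₀
      have hne : z - z₀ ≠ 0 := sub_ne_zero.mpr hzz₀
      rw [dslope_of_ne _ hzz₀, slope_def_module, hz, hf₀, sub_zero, smul_smul,
        pow_succ', inv_mul_cancel_left₀ hne]

end PowerSeries

theorem HasSum.pow_smul_shift_of_zpow_smul {𝕜 : Type*} {E : Type*} [NontriviallyNormedField 𝕜]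
    [NormedAddCommGroup E] [NormedSpace 𝕜 E] {z : 𝕜} {N : ℕ} {a : ℤ → E} {e : E} (hz : z ≠ 0)
    (ha : ∀ n < -(N : ℤ), a n = 0) (h : HasSum (fun n : ℤ => z ^ n • a n) e) :
    HasSum (fun m : ℕ => z ^ m • a (m - N)) (z ^ N • e) := by
  have hinj : Function.Injective (fun m : ℕ => (m : ℤ) - N) := fun x y hxy => by
    simpa using hxy
  have hsupp : ∀ n ∉ Set.range (fun m : ℕ => (m : ℤ) - N), z ^ n • a n = 0 := by
    intro n hn
    have : n < -(N : ℤ) := by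
      by_contra! h
      exact hn ⟨(n + N).toNat, show ((n + N).toNat : ℤ) - N = n by omega⟩
    simp [ha n this]
  refine ((hinj.hasSum_iff hsupp).mpr h).const_smul (z ^ N) |>.congr_fun fun m => ?_
  simp only [Function.comp_apply, smul_smul, ← zpow_natCast, ← zpow_add₀ hz]
  congr 2
  ring

theorem ContinuousLinearMap.pow_apply_of_apply_eq_smul {R M : Type*} [CommSemiring R]
    [TopologicalSpace M] [AddCommMonoid M] [Module R M] (T : M →L[R] M) {c : R} {x : M}
    (hx : T x = c • x) (k : ℕ) : (T ^ k) x = c ^ k • x := by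
  induction k with
  | zero => simp
  | succ k ih =>
    rw [pow_succ']
    change T ((T ^ k) x) = _
    rw [ih, map_smul, hx, smul_smul, pow_succ]

theorem pow_apply_laurent_coeff_eq_zero {𝕜 V : Type*} [NontriviallyNormedField 𝕜]
    [NormedAddCommGroup V] [NormedSpace 𝕜 V] (T : V →L[𝕜] V) {z₀ : 𝕜} {N : ℕ} {a : ℤ → V}
    (ha : ∀ n < -(N : ℤ), a n = 0) {E : 𝕜 → V} {μ : 𝕜 → 𝕜} (hμ : ContinuousAt μ z₀)
    (hE : ∀ᶠ z in 𝓝[≠] z₀, HasSum (fun n : ℤ => (z - z₀) ^ n • a n) (E z))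
    (hTE : ∀ᶠ z in 𝓝[≠] z₀, T (E z) = ((z - z₀) * μ z) • E z) {k m : ℕ} (hmk : m < k) :
    (T ^ k) (a (m - N)) = 0 := by
  -- `F z = (z - z₀) ^ N • E z` extends across `z₀` with Taylor coefficients `a (m - N)`
  set F : 𝕜 → V := fun z => ∑' m : ℕ, (z - z₀) ^ m • a (m - N)
  have hshift : ∀ᶠ z in 𝓝[≠] z₀,
      HasSum (fun m : ℕ => (z - z₀) ^ m • a (m - N)) ((z - z₀) ^ N • E z) := by
    filter_upwards [hE, self_mem_nhdsWithin] with z hz hne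
    exact hz.pow_smul_shift_of_zpow_smul (sub_ne_zero.mpr hne) ha
  have hsum : ∀ᶠ z in 𝓝 z₀, HasSum (fun m : ℕ => (z - z₀) ^ m • a (m - N)) (F z) := by
    filter_upwards [eventually_nhdsWithin_iff.mp hshift] with z hz
    refine Summable.hasSum ?_
    rcases eq_or_ne z z₀ with rfl | hne
    · simpa using (HasSum.hasSum_at_zero fun m : ℕ => a (m - N)).summable
    · exact (hz hne).summable
  have hF : HasFPowerSeriesAt F (ofCoeff 𝕜 fun m : ℕ => a (m - N)) z₀ :=
    hasFPowerSeriesAt_ofCoeff hsum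
  have hTkF : HasFPowerSeriesAt (fun z => (T ^ k) (F z))
      (ofCoeff 𝕜 fun m : ℕ => (T ^ k) (a (m - N))) z₀ :=
    hasFPowerSeriesAt_ofCoeff <| hsum.mono fun z hz => by simpa using (T ^ k).hasSum hz
  have hTF : ∀ᶠ z in 𝓝[≠] z₀, (T ^ k) (F z) = (z - z₀) ^ k • (μ z ^ k • F z) := by
    filter_upwards [hshift, hTE] with z hzF hzT
    have hFz : F z = (z - z₀) ^ N • E z := hzF.tsum_eq
    rw [smul_smul, ← mul_pow]
    refine T.pow_apply_of_apply_eq_smul ?_ k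
    rw [hFz, map_smul, hzT, smul_comm]
  simpa using hTkF.coeff_eq_zero_of_eventuallyEq_pow_smul ((hμ.pow k).smul hF.continuousAt) hTF hmk

theorem negative_laurent_coefficients_are_generalized_eigenvectors_general
    {V : Type*} [NormedAddCommGroup V] [NormedSpace ℂ V]
    (Δ : V →L[ℂ] V) (s₀ : ℂ) (r : ℝ) (hr : 0 < r) (N : ℕ)
    (a : ℤ → V) (ha : ∀ n : ℤ, n < -(N : ℤ) → a n = 0)
    (E : ℂ → V) (lam : ℂ → ℂ)
    (hE : ∀ s : ℂ, s ≠ s₀ → ‖s - s₀‖ < r →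
      HasSum (fun n : ℤ => (s - s₀) ^ n • a n) (E s))
    (hlam : ∀ s ∈ Metric.ball s₀ r, AnalyticAt ℂ lam s)
    (heq : ∀ s : ℂ, s ≠ s₀ → ‖s - s₀‖ < r → Δ (E s) = lam s • E s) :
    ∀ n : ℕ, 1 ≤ n → n ≤ N →
      (fun v => Δ v - lam s₀ • v)^[N - n + 1] (a (-(n : ℤ))) = 0 := by
  intro n _ hnN
  set T : V →L[ℂ] V := Δ - lam s₀ • 1
  have hnear : ∀ᶠ s in 𝓝[≠] s₀, s ≠ s₀ ∧ ‖s - s₀‖ < r := by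
    filter_upwards [self_mem_nhdsWithin, nhdsWithin_le_nhds (Metric.ball_mem_nhds s₀ hr)]
      with s hne hs
    exact ⟨hne, by simpa [dist_eq_norm] using hs⟩
  have hμ : ContinuousAt (dslope lam s₀) s₀ :=
    continuousAt_dslope_same.mpr (hlam s₀ (Metric.mem_ball_self hr)).differentiableAt
  have hTE : ∀ᶠ s in 𝓝[≠] s₀, T (E s) = ((s - s₀) * dslope lam s₀ s) • E s :=
    hnear.mono fun s hs => by
      rw [← smul_eq_mul, sub_smul_dslope]
      simp [T, heq s hs.1 hs.2, sub_smul]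
  have key := pow_apply_laurent_coeff_eq_zero T ha hμ (hnear.mono fun s hs => hE s hs.1 hs.2) hTE
    (show N - n < N - n + 1 by omega)
  rw [show ((N - n : ℕ) : ℤ) - N = -n by omega] at key
  rw [← key, pow_apply_eq_iterate]
  rfl

/-- At a pole of order at most `N` of an eigenfunction family `E(s) = Σ_{n ≥ -N} aₙ (s-s₀)ⁿ`,
every negative Laurent coefficient `a₋ₙ` (for `1 ≤ n ≤ N`) is a generalized eigenvector:
`(Δ − λ(s₀))^{N-n+1}(a₋ₙ) = 0`. -/
theorem negative_laurent_coefficients_are_generalized_eigenvectors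
    {V : Type*} [NormedAddCommGroup V] [NormedSpace ℂ V] [CompleteSpace V]
    (Δ : V →L[ℂ] V) (s₀ : ℂ) (r : ℝ) (hr : 0 < r) (N : ℕ) (hN : 1 ≤ N)
    (a : ℤ → V) (ha : ∀ n : ℤ, n < -(N : ℤ) → a n = 0)
    (E : ℂ → V) (lam : ℂ → ℂ)
    (hE : ∀ s : ℂ, s ≠ s₀ → ‖s - s₀‖ < r →
      HasSum (fun n : ℤ => (s - s₀) ^ n • a n) (E s))
    (hlam : ∀ s ∈ Metric.ball s₀ r, AnalyticAt ℂ lam s)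
    (heq : ∀ s : ℂ, s ≠ s₀ → ‖s - s₀‖ < r → Δ (E s) = lam s • E s) :
    ∀ n : ℕ, 1 ≤ n → n ≤ N →
      (fun v => Δ v - lam s₀ • v)^[N - n + 1] (a (-(n : ℤ))) = 0 :=
  negative_laurent_coefficients_are_generalized_eigenvectors_general Δ s₀ r hr N a ha E lam hE hlam
    heq
end

section
/- Let ξ denote the completed Riemann zeta function ξ(s) = π^{−s/2} Γ(s/2) ζ(s) (Mathlib's riemannCompletedZeta). For s ∈ ℂ define the 3×3 complex matrix N(s) = [n_{ij}(s)] by: n₁₁ = 1, n₁₂ = ξ(s−1/2)/ξ(s+3/2), n₁₃ = ξ(s+1/2)/ξ(s+3/2); n₂₁ = ξ(−s−1/2)/ξ(−s+3/2), n₂₂ = 1, n₂₃ = ξ(−s+1/2)/ξ(−s+3/2); n₃₁ = ξ(−s+1/2)/ξ(−s+3/2), n₃₂ = ξ(s+1/2)/ξ(s+3/2), n₃₃ = n₃₂ · n₃₁. If ξ(s + 3/2) ≠ 0 and ξ(3/2 − s) ≠ 0, then n_{ij}(s) = n_{i1}(s) · n_{1j}(s) for all i, j ∈ {1,2,3}; consequently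 the matrix N(s) has rank exactly one. -/
open Complex

/-- The matrix of residues of constant-term coefficients of the `SL(3,ℤ)` Borel
Eisenstein series along its three polar hyperplanes (Langlands' Lemma 7.4 for `SL(3)`). -/
noncomputable def langlandsNMatrix (s : ℂ) : Matrix (Fin 3) (Fin 3) ℂ :=
  !![1,
     completedRiemannZeta (s - 1/2) / completedRiemannZeta (s + 3/2),
     completedRiemannZeta (s + 1/2) / completedRiemannZeta (s + 3/2);
     completedRiemannZeta (-s - 1/2) / completedRiemannZeta (-s + 3/2),
     1,
     completedRiemannZeta (-s + 1/2) / completedRiemannZeta (-s + 3/2);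
     completedRiemannZeta (-s + 1/2) / completedRiemannZeta (-s + 3/2),
     completedRiemannZeta (s + 1/2) / completedRiemannZeta (s + 3/2),
     (completedRiemannZeta (s + 1/2) / completedRiemannZeta (s + 3/2)) *
       (completedRiemannZeta (-s + 1/2) / completedRiemannZeta (-s + 3/2))]

private lemma laux1 (b c : ℂ) (hb : b ≠ 0) (hc : c ≠ 0) :
    (1 : ℂ) = b * c⁻¹ * c * b⁻¹ := by field_simp

private lemma laux2 (a b c : ℂ) (hb : b ≠ 0) (hc : c ≠ 0) :
    a * c⁻¹ = c⁻¹ * b * a * b⁻¹ := by field_simp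

private lemma laux3 (a b c : ℂ) (hb : b ≠ 0) (hc : c ≠ 0) :
    a * b⁻¹ = b⁻¹ * a * c⁻¹ * c := by field_simp

set_option maxHeartbeats 1600000 in
/-- If `ξ(s+3/2) ≠ 0` and `ξ(3/2−s) ≠ 0`, then `n_{ij}(s) = n_{i1}(s)·n_{1j}(s)` for all
`i, j`, so the matrix `[n_{ij}(s)]` has rank exactly one. -/
theorem langlandsNMatrix_rank_one (s : ℂ)
    (h1 : completedRiemannZeta (s + 3/2) ≠ 0)
    (h2 : completedRiemannZeta (3/2 - s) ≠ 0) :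
    (∀ i j : Fin 3, langlandsNMatrix s i j = langlandsNMatrix s i 0 * langlandsNMatrix s 0 j) ∧
    (langlandsNMatrix s).rank = 1 := by
  have f1 : completedRiemannZeta (-1/2 - s) = completedRiemannZeta (3/2 + s) := by
    rw [← completedRiemannZeta_one_sub (3/2 + s)]; ring_nf
  have f2 : completedRiemannZeta (-1/2 + s) = completedRiemannZeta (3/2 - s) := by
    rw [← completedRiemannZeta_one_sub (3/2 - s)]; ring_nf
  have f3 : completedRiemannZeta (1/2 - s) = completedRiemannZeta (1/2 + s) := by
    rw [← completedRiemannZeta_one_sub (1/2 + s)]; ring_nf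
  have h1' : completedRiemannZeta (3/2 + s) ≠ 0 := by
    rwa [show (s : ℂ) + 3/2 = 3/2 + s by ring] at h1
  have h2' := h2
  ring_nf at f1 f2 f3 h1' h2'
  have key : ∀ i j : Fin 3,
      langlandsNMatrix s i j = langlandsNMatrix s i 0 * langlandsNMatrix s 0 j := by
    intro i j
    fin_cases i <;> fin_cases j <;> simp [langlandsNMatrix] <;> ring_nf
    all_goals try rw [f1]
    all_goals try rw [f2]
    all_goals try rw [f3]
    all_goals try ring
    all_goals try rw [mul_inv_cancel_right₀ h2']
    all_goals try rw [mul_inv_cancel_right₀ h1']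
    all_goals try rw [mul_inv_cancel₀ h1']
  refine ⟨key, ?_⟩
  have hfac : langlandsNMatrix s =
      (Matrix.of fun i (_ : Fin 1) => langlandsNMatrix s i 0) *
      (Matrix.of fun (_ : Fin 1) j => langlandsNMatrix s 0 j) := by
    ext i j
    simp [Matrix.mul_apply, ← key i j]
  have hle : (langlandsNMatrix s).rank ≤ 1 := by
    rw [hfac]
    exact le_trans (Matrix.rank_mul_le_left _ _)
      (le_trans (Matrix.rank_le_card_width _) (by simp))
  have hge : 1 ≤ (langlandsNMatrix s).rank := by
    rw [Matrix.rank, Nat.succ_le_iff]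
    apply Module.finrank_pos_iff.mpr
    refine ⟨⟨(langlandsNMatrix s).mulVecLin (Pi.single 0 1), ⟨Pi.single 0 1, rfl⟩⟩, 0, ?_⟩
    intro h
    have h0 : (langlandsNMatrix s).mulVecLin (Pi.single 0 1) 0 = 0 := by
      simpa using congrFun (congrArg Subtype.val h) 0
    rw [Matrix.mulVecLin_apply] at h0
    simp [Matrix.mulVec, dotProduct, Fin.sum_univ_three, Pi.single_apply,
      langlandsNMatrix] at h0
  omega
end
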